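/- arXiv:gr-qc/0701054 — 3 statements merged into one kernel-verified Lean document; each statement's English description precedes it below -/
import Mathlib

section
/- Let M be the 8×8 matrix with nonzero entries M₁₂ = -1, M₂₁ = ε², M₂₂ = 2ε, M₅₅ = 2k, M₇₇ = ε, M₈₁ = ε(k-1), M₈₂ = k-1, M₈₈ = ε, where ε > 0 and k > 3 are real constants. Then there exists a constant C such that for all σ ∈ (0,1), the operator norm of σ^M = exp((log σ)·M) is at most C. -/
open scoped Matrix

attribute [local instance] Matrix.linftyOpNormedRing Matrix.linftyOpNormedAlgebra

/-- The 8×8 matrix arising as the principal part of the Fuchsian system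
for half-polarized T² symmetric spacetimes: nonzero entries
M₁₂ = -1, M₂₁ = ε², M₂₂ = 2ε, M₅₅ = 2k, M₇₇ = ε, M₈₁ = ε(k-1), M₈₂ = k-1, M₈₈ = ε
(1-based indexing). -/
noncomputable def fuchsianMatrix (ε k : ℝ) : Matrix (Fin 8) (Fin 8) ℝ :=
  fun i j =>
    if i = 0 ∧ j = 1 then -1
    else if i = 1 ∧ j = 0 then ε ^ 2
    else if i = 1 ∧ j = 1 then 2 * ε
    else if i = 4 ∧ j = 4 then 2 * k
    else if i = 6 ∧ j = 6 then ε
    else if i = 7 ∧ j = 0 then ε * (k - 1)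
    else if i = 7 ∧ j = 1 then k - 1
    else if i = 7 ∧ j = 7 then ε
    else 0

/-!
Split `M = D + u vᵀ` with `D` diagonal with nonnegative entries and `vᵀ u = 0`, so that the
rank-one part squares to zero. Since `u` and `v` are supported where `D` equals `ε`, the two parts
commute, and `exp (t M) = exp (t D) (1 + t u vᵀ) = exp (t D) + t e^{t ε} u vᵀ`. For `t = log σ ≤ 0`
the first term has norm at most `1`, and `|t| e^{t ε} ≤ e⁻¹ / ε`.
-/

open Matrix NormedSpace

theorem NormedSpace.exp_eq_one_add_of_mul_self_eq_zero {𝔸 : Type*} [NormedRing 𝔸]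
    [NormedAlgebra ℚ 𝔸] [CompleteSpace 𝔸] {a : 𝔸} (ha : a * a = 0) : exp a = 1 + a := by
  rw [exp_eq_tsum ℚ]
  dsimp only
  rw [tsum_eq_sum (s := {0, 1})]
  · simp
  · intro n hn
    simp only [Finset.mem_insert, Finset.mem_singleton, not_or] at hn
    rw [pow_eq_zero_of_le (by omega : 2 ≤ n) (by rw [sq, ha]), smul_zero]

theorem Real.abs_mul_exp_mul_le {c t : ℝ} (hc : 0 < c) (ht : t ≤ 0) :
    |t * Real.exp (t * c)| ≤ Real.exp (-1) / c := by
  rw [le_div_iff₀ hc, abs_of_nonpos (mul_nonpos_of_nonpos_of_nonneg ht (Real.exp_pos _).le)]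
  calc -(t * Real.exp (t * c)) * c = -(t * c) * Real.exp (-(-(t * c))) := by ring_nf
    _ ≤ Real.exp (-1) := Real.mul_exp_neg_le_exp_neg_one _

namespace Matrix

variable {n : Type*} [Fintype n] [DecidableEq n]

theorem diagonal_mul_vecMulVec_of_forall {α : Type*} [CommSemiring α] {w u v : n → α} {a : α}
    (h : ∀ i, u i ≠ 0 → w i = a) : diagonal w * vecMulVec u v = a • vecMulVec u v := by
  ext i j
  rw [diagonal_mul, smul_apply, vecMulVec_apply, smul_eq_mul]
  by_cases hu : u i = 0
  · simp [hu]
  · rw [h i hu]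

theorem vecMulVec_mul_diagonal_of_forall {α : Type*} [CommSemiring α] {w u v : n → α} {a : α}
    (h : ∀ j, v j ≠ 0 → w j = a) : vecMulVec u v * diagonal w = a • vecMulVec u v := by
  ext i j
  rw [mul_diagonal, smul_apply, vecMulVec_apply, smul_eq_mul]
  by_cases hv : v j = 0
  · simp [hv]
  · rw [h j hv, mul_comm]

theorem exp_smul_diagonal_add_vecMulVec {d u v : n → ℝ} {c : ℝ} (t : ℝ)
    (hu : ∀ i, u i ≠ 0 → d i = c) (hv : ∀ j, v j ≠ 0 → d j = c) (hvu : v ⬝ᵥ u = 0) :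
    exp (t • (diagonal d + vecMulVec u v)) =
      diagonal (fun i => Real.exp (t * d i)) + (t * Real.exp (t * c)) • vecMulVec u v := by
  set N := vecMulVec u v
  have hN : N * N = 0 := by rw [vecMulVec_mul_vecMulVec, hvu, zero_smul, vecMulVec_zero]
  have hcomm : Commute (diagonal d) N :=
    (diagonal_mul_vecMulVec_of_forall hu).trans (vecMulVec_mul_diagonal_of_forall hv).symm
  have hexpD : exp (t • diagonal d) = diagonal (fun i => Real.exp (t * d i)) := by
    rw [← diagonal_smul, exp_diagonal, Pi.exp_def, ← Real.exp_eq_exp_ℝ]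
    rfl
  have hexpN : exp (t • N) = 1 + t • N :=
    exp_eq_one_add_of_mul_self_eq_zero (by rw [smul_mul_smul_comm, hN, smul_zero])
  calc exp (t • (diagonal d + N)) = exp (t • diagonal d) * exp (t • N) := by
        rw [smul_add]
        exact NormedSpace.exp_add_of_commute ((hcomm.smul_left t).smul_right t)
    _ = diagonal (fun i => Real.exp (t * d i)) +
          t • (diagonal (fun i => Real.exp (t * d i)) * N) := by
        rw [hexpD, hexpN, mul_add, mul_one, mul_smul_comm]
    _ = _ := by
        rw [diagonal_mul_vecMulVec_of_forall (a := Real.exp (t * c)) fun i hi => by rw [hu i hi],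
          smul_smul]

theorem norm_exp_smul_diagonal_add_vecMulVec_le {d u v : n → ℝ} {c t : ℝ} (hd : 0 ≤ d)
    (hc : 0 < c) (ht : t ≤ 0) (hu : ∀ i, u i ≠ 0 → d i = c) (hv : ∀ j, v j ≠ 0 → d j = c)
    (hvu : v ⬝ᵥ u = 0) :
    ‖exp (t • (diagonal d + vecMulVec u v))‖ ≤ 1 + Real.exp (-1) / c * ‖vecMulVec u v‖ := by
  have hdiag : ‖diagonal (fun i => Real.exp (t * d i))‖ ≤ 1 := by
    rw [linfty_opNorm_diagonal, pi_norm_le_iff_of_nonneg zero_le_one]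
    intro i
    rw [Real.norm_of_nonneg (Real.exp_pos _).le, Real.exp_le_one_iff]
    exact mul_nonpos_of_nonpos_of_nonneg ht (hd i)
  rw [exp_smul_diagonal_add_vecMulVec t hu hv hvu]
  refine (norm_add_le _ _).trans (add_le_add hdiag ?_)
  rw [norm_smul, Real.norm_eq_abs]
  gcongr
  exact Real.abs_mul_exp_mul_le hc ht

end Matrix

def fuchsianDiag (ε k : ℝ) : Fin 8 → ℝ := ![ε, ε, 0, 0, 2 * k, 0, ε, ε]

def fuchsianLeft (ε k : ℝ) : Fin 8 → ℝ := ![-1, ε, 0, 0, 0, 0, 0, k - 1]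

def fuchsianRight (ε : ℝ) : Fin 8 → ℝ := ![ε, 1, 0, 0, 0, 0, 0, 0]

theorem fuchsianMatrix_eq (ε k : ℝ) : fuchsianMatrix ε k =
    diagonal (fuchsianDiag ε k) + vecMulVec (fuchsianLeft ε k) (fuchsianRight ε) := by
  ext i j
  fin_cases i <;> fin_cases j <;>
    simp [fuchsianMatrix, fuchsianDiag, fuchsianLeft, fuchsianRight] <;> ring

/-- For the Fuchsian matrix M with ε > 0 and k > 3, the operator norm of
σ^M = exp((log σ)·M) is uniformly bounded for σ ∈ (0,1). -/
theorem sigma_pow_M_bounded (ε k : ℝ) (hε : 0 < ε) (hk : 3 < k) :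
    ∃ C : ℝ, ∀ σ : ℝ, σ ∈ Set.Ioo (0 : ℝ) 1 →
      ‖NormedSpace.exp (Real.log σ • fuchsianMatrix ε k)‖ ≤ C := by
  refine ⟨1 + Real.exp (-1) / ε * ‖vecMulVec (fuchsianLeft ε k) (fuchsianRight ε)‖, ?_⟩
  rintro σ ⟨hσ0, hσ1⟩
  have hd : 0 ≤ fuchsianDiag ε k := by
    intro i
    fin_cases i <;> simp [fuchsianDiag] <;> linarith
  have hu : ∀ i, fuchsianLeft ε k i ≠ 0 → fuchsianDiag ε k i = ε := by
    intro i
    fin_cases i <;> simp [fuchsianLeft, fuchsianDiag]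
  have hv : ∀ j, fuchsianRight ε j ≠ 0 → fuchsianDiag ε k j = ε := by
    intro j
    fin_cases j <;> simp [fuchsianRight, fuchsianDiag]
  have hvu : fuchsianRight ε ⬝ᵥ fuchsianLeft ε k = 0 := by
    simp [dotProduct, Fin.sum_univ_eight, fuchsianRight, fuchsianLeft]
  rw [fuchsianMatrix_eq]
  exact norm_exp_smul_diagonal_add_vecMulVec_le hd hε (Real.log_nonpos hσ0.le hσ1.le) hu hv hvu
end

section
/- With the ansatz U(t) = ½(1-k)·log t + φ, A(t) = ψ + t^{2k}·B, η(t) = ¼(1-k)²·log t + λ, α(t) = γ (constants φ, ψ, λ, B, γ > 0, Λ > 0, K ≠ 0), and D = t·d/dt, if k > 3 then the residual of the truncated α-equation, Dα + 4t²α²e^{2(η-U)}Λ + (e^{2η}/t²)·α²·K², tends to 0 as t → 0⁺; moreover for 0 < k ≤ 3 with K ≠ 0, the twist term (e^{2η}/t²)·α²·K² = γ²K²e^{2λ}·t^{(k-3)(k+1)/2} does not tend to 0. -/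
/-!
With the ansatz `α` is constant, so `Dα = 0`, and for `t > 0` both remaining terms are constant
multiples of powers of `t`: the cosmological term of `t ^ ((k ^ 2 + 3) / 2)`, the twist term of
`t ^ ((k - 3) * (k + 1) / 2)`. The first exponent is always positive; the second is positive
exactly when `k > 3` (for `k > 0`), and otherwise `t ^ e ≥ 1` near `0`.
-/

open Real Filter

/-- The operator D = t·d/dt. -/
noncomputable def Dop (f : ℝ → ℝ) : ℝ → ℝ := fun t => t * deriv f t

open Topology

lemma tendsto_rpow_nhdsGT_zero {e : ℝ} (he : 0 < e) :
    Tendsto (fun t : ℝ => t ^ e) (𝓝[>] 0) (𝓝 0) :=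
  (tendsto_id.mono_left nhdsWithin_le_nhds).rpow_const_nhds_zero he

lemma not_tendsto_const_mul_rpow_nhdsGT_zero {c e : ℝ} (hc : c ≠ 0) (he : e ≤ 0) :
    ¬Tendsto (fun t : ℝ => c * t ^ e) (𝓝[>] 0) (𝓝 0) := by
  intro h
  have hpow : Tendsto (fun t : ℝ => t ^ e) (𝓝[>] 0) (𝓝 0) := by
    simpa only [inv_mul_cancel_left₀ hc, mul_zero] using h.const_mul c⁻¹
  have hge : ∀ᶠ t : ℝ in 𝓝[>] 0, 1 ≤ t ^ e := by
    filter_upwards [Ioo_mem_nhdsGT one_pos] with t ht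
    exact one_le_rpow_of_pos_of_le_one_of_nonpos ht.1 ht.2.le he
  exact absurd (ge_of_tendsto hpow hge) (by norm_num)

section Ansatz

variable (k φ lam γ Λ K : ℝ) {t : ℝ}

lemma cosmological_term_eq (ht : 0 < t) :
    4 * t ^ 2 * γ ^ 2
        * exp (2 * ((1 / 4 * (1 - k) ^ 2 * log t + lam) - (1 / 2 * (1 - k) * log t + φ))) * Λ
      = 4 * Λ * γ ^ 2 * exp (2 * (lam - φ)) * t ^ ((k ^ 2 + 3) / 2) := by
  have ht2 : t ^ 2 = exp (log t * 2) := by rw [← rpow_def_of_pos ht]; norm_cast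
  calc _ = 4 * Λ * γ ^ 2
        * exp (log t * 2 + 2 * ((1 / 4 * (1 - k) ^ 2 * log t + lam)
          - (1 / 2 * (1 - k) * log t + φ))) := by rw [exp_add, ← ht2]; ring
    _ = _ := by rw [rpow_def_of_pos ht, mul_assoc _ (exp _), ← exp_add]; ring_nf

lemma twist_term_eq (ht : 0 < t) :
    exp (2 * (1 / 4 * (1 - k) ^ 2 * log t + lam)) / t ^ 2 * γ ^ 2 * K ^ 2
      = γ ^ 2 * K ^ 2 * exp (2 * lam) * t ^ ((k - 3) * (k + 1) / 2) := by
  have ht2 : t ^ 2 = exp (log t * 2) := by rw [← rpow_def_of_pos ht]; norm_cast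
  calc _ = γ ^ 2 * K ^ 2
        * exp (2 * (1 / 4 * (1 - k) ^ 2 * log t + lam) - log t * 2) := by rw [exp_sub, ht2]; ring
    _ = _ := by rw [rpow_def_of_pos ht, mul_assoc _ (exp _), ← exp_add]; ring_nf

end Ansatz

theorem truncated_alpha_equation_residual_general (k φ lam γ Λ K : ℝ)
    (hγ : 0 < γ) (hK : K ≠ 0) :
    let U : ℝ → ℝ := fun t => (1 / 2) * (1 - k) * Real.log t + φ
    let η : ℝ → ℝ := fun t => (1 / 4) * (1 - k) ^ 2 * Real.log t + lam
    let α : ℝ → ℝ := fun _ => γ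
    (3 < k →
      Tendsto
        (fun t : ℝ =>
          Dop α t + 4 * t ^ 2 * (α t) ^ 2 * Real.exp (2 * (η t - U t)) * Λ
            + (Real.exp (2 * η t) / t ^ 2) * (α t) ^ 2 * K ^ 2)
        (nhdsWithin 0 (Set.Ioi 0)) (nhds 0)) ∧
    (0 < k → k ≤ 3 →
      ¬ Tendsto
        (fun t : ℝ => (Real.exp (2 * η t) / t ^ 2) * (α t) ^ 2 * K ^ 2)
        (nhdsWithin 0 (Set.Ioi 0)) (nhds 0)) := by
  intro U η α
  have hDα : Dop α = 0 := by funext t; simp [Dop, α]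
  refine ⟨fun hk => ?_, fun hk0 hk3 => ?_⟩
  · have he : 0 < (k - 3) * (k + 1) / 2 :=
      div_pos (mul_pos (by linarith) (by linarith)) two_pos
    have hlim := ((tendsto_rpow_nhdsGT_zero (by positivity : (0 : ℝ) < (k ^ 2 + 3) / 2)).const_mul
      (4 * Λ * γ ^ 2 * exp (2 * (lam - φ)))).add
      ((tendsto_rpow_nhdsGT_zero he).const_mul (γ ^ 2 * K ^ 2 * exp (2 * lam)))
    simp only [mul_zero, add_zero] at hlim
    refine hlim.congr' ?_
    filter_upwards [self_mem_nhdsWithin] with t (ht : 0 < t)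
    rw [hDα, Pi.zero_apply, zero_add, cosmological_term_eq k φ lam γ Λ ht,
      twist_term_eq k lam γ K ht]
  · have he : (k - 3) * (k + 1) / 2 ≤ 0 :=
      div_nonpos_of_nonpos_of_nonneg
        (mul_nonpos_of_nonpos_of_nonneg (by linarith) (by linarith)) two_pos.le
    intro h
    refine not_tendsto_const_mul_rpow_nhdsGT_zero (c := γ ^ 2 * K ^ 2 * exp (2 * lam))
      (by positivity) he (h.congr' ?_)
    filter_upwards [self_mem_nhdsWithin] with t (ht : 0 < t)
    exact twist_term_eq k lam γ K ht

/-- With the VTD ansatz, the residual of the truncated α-equation tends to 0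
as t → 0⁺ iff k > 3: for k > 3 the residual tends to 0, while for 0 < k ≤ 3
(and K ≠ 0) the twist term does not tend to 0. -/
theorem truncated_alpha_equation_residual (k φ ψ B lam γ Λ K : ℝ)
    (hγ : 0 < γ) (hΛ : 0 < Λ) (hK : K ≠ 0) :
    let U : ℝ → ℝ := fun t => (1 / 2) * (1 - k) * Real.log t + φ
    let η : ℝ → ℝ := fun t => (1 / 4) * (1 - k) ^ 2 * Real.log t + lam
    let α : ℝ → ℝ := fun _ => γ
    (3 < k →
      Tendsto
        (fun t : ℝ =>
          Dop α t + 4 * t ^ 2 * (α t) ^ 2 * Real.exp (2 * (η t - U t)) * Λ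
            + (Real.exp (2 * η t) / t ^ 2) * (α t) ^ 2 * K ^ 2)
        (nhdsWithin 0 (Set.Ioi 0)) (nhds 0)) ∧
    (0 < k → k ≤ 3 →
      ¬ Tendsto
        (fun t : ℝ => (Real.exp (2 * η t) / t ^ 2) * (α t) ^ 2 * K ^ 2)
        (nhdsWithin 0 (Set.Ioi 0)) (nhds 0)) :=
  truncated_alpha_equation_residual_general k φ lam γ Λ K hγ hK
end

section
/- Let E(t) = ∫_{S¹} [U_t²/√α + √α U_θ² + (e^{4U}/(4t²))(A_t²/√α + √α A_θ²) + √α e^{2(η-U)}Λ + (e^{2η}√α/(4t⁴))K²] dθ, where U, A, η, α solve the areal-coordinate Einstein evolution and constraint equations (2.4)–(2.9) with Λ > 0 on S¹ × [t₂, t₃), α > 0. Then E is non-increasing: dE/dt = -(2/t)∫_{S¹} [U_t²/√α + (e^{4U}/(4t²))√α A_θ² + (e^{2η}√α K²)/(2t⁴)] dθ ≤ 0. -/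
/-- Partial derivative in the second (time) variable. -/
noncomputable def pt (f : ℝ → ℝ → ℝ) : ℝ → ℝ → ℝ := fun θ t => deriv (f θ) t

/-- Partial derivative in the first (space) variable. -/
noncomputable def pθ (f : ℝ → ℝ → ℝ) : ℝ → ℝ → ℝ := fun θ t => deriv (fun θ' => f θ' t) θ

open Real Function Set MeasureTheory intervalIntegral

section aux

variable {f : ℝ → ℝ → ℝ}

lemma uncurry_apply' (f : ℝ → ℝ → ℝ) (θ t : ℝ) : f θ t = uncurry f (θ, t) := rfl

lemma hasDerivAt_pt (hf : Differentiable ℝ (uncurry f)) (θ t : ℝ) :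
    HasDerivAt (f θ) (pt f θ t) t := by
  have hd : DifferentiableAt ℝ (f θ) t := by
    have h : f θ = fun s => uncurry f (θ, s) := rfl
    rw [h]
    exact (hf (θ, t)).comp t (DifferentiableAt.prodMk (differentiableAt_const θ) differentiableAt_id)
  exact hd.hasDerivAt

lemma hasDerivAt_pθ (hf : Differentiable ℝ (uncurry f)) (θ t : ℝ) :
    HasDerivAt (fun θ' => f θ' t) (pθ f θ t) θ := by
  have hd : DifferentiableAt ℝ (fun θ' => f θ' t) θ := by
    have h : (fun θ' => f θ' t) = fun θ' => uncurry f (θ', t) := rfl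
    rw [h]
    exact (hf (θ, t)).comp θ (DifferentiableAt.prodMk (differentiableAt_id (𝕜 := ℝ) (x := θ)) (differentiableAt_const t) :
      DifferentiableAt ℝ (fun θ' : ℝ => (θ', t)) θ)
  exact hd.hasDerivAt

lemma pt_eq_fderiv (hf : Differentiable ℝ (uncurry f)) (θ t : ℝ) :
    pt f θ t = fderiv ℝ (uncurry f) (θ, t) (0, 1) := by
  have h1 : HasDerivAt (fun s : ℝ => ((θ : ℝ), s)) ((0 : ℝ), (1 : ℝ)) t :=
    HasDerivAt.prodMk (hasDerivAt_const t θ) (hasDerivAt_id t)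
  have h2 : HasDerivAt (f θ) (fderiv ℝ (uncurry f) (θ, t) (0, 1)) t :=
    (hf (θ, t)).hasFDerivAt.comp_hasDerivAt t h1
  exact h2.deriv.symm ▸ rfl

lemma pθ_eq_fderiv (hf : Differentiable ℝ (uncurry f)) (θ t : ℝ) :
    pθ f θ t = fderiv ℝ (uncurry f) (θ, t) (1, 0) := by
  have h1 : HasDerivAt (fun θ' : ℝ => (θ', t)) ((1 : ℝ), (0 : ℝ)) θ :=
    HasDerivAt.prodMk (hasDerivAt_id θ) (hasDerivAt_const θ t)
  have h2 : HasDerivAt (fun θ' => f θ' t) (fderiv ℝ (uncurry f) (θ, t) (1, 0)) θ := by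
    have := (hf (θ, t)).hasFDerivAt.comp_hasDerivAt θ h1; exact this
  exact h2.deriv.symm ▸ rfl

lemma contDiff_uncurry_pt (hf : ContDiff ℝ 2 (uncurry f)) :
    ContDiff ℝ 1 (uncurry (pt f)) := by
  have h : uncurry (pt f) = fun p : ℝ × ℝ => fderiv ℝ (uncurry f) p ((0 : ℝ), (1 : ℝ)) := by
    funext p
    cases p with
    | mk θ t => exact pt_eq_fderiv (hf.differentiable two_ne_zero) θ t
  rw [h]
  exact (hf.fderiv_right (le_refl _)).clm_apply contDiff_const

lemma contDiff_uncurry_pθ (hf : ContDiff ℝ 2 (uncurry f)) :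
    ContDiff ℝ 1 (uncurry (pθ f)) := by
  have h : uncurry (pθ f) = fun p : ℝ × ℝ => fderiv ℝ (uncurry f) p ((1 : ℝ), (0 : ℝ)) := by
    funext p
    cases p with
    | mk θ t => exact pθ_eq_fderiv (hf.differentiable two_ne_zero) θ t
  rw [h]
  exact (hf.fderiv_right (le_refl _)).clm_apply contDiff_const

lemma clairaut (hf : ContDiff ℝ 2 (uncurry f)) (θ t : ℝ) :
    pt (pθ f) θ t = pθ (pt f) θ t := by
  have hd1 : Differentiable ℝ (uncurry f) := hf.differentiable two_ne_zero
  have hfd : ContDiff ℝ 1 (fderiv ℝ (uncurry f)) := hf.fderiv_right (le_refl _)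
  have hdd : DifferentiableAt ℝ (fderiv ℝ (uncurry f)) (θ, t) :=
    (hfd.differentiable one_ne_zero) (θ, t)
  have hsym : IsSymmSndFDerivAt ℝ (uncurry f) (θ, t) :=
    hf.contDiffAt.isSymmSndFDerivAt (by simp)
  -- pt (pθ f) θ t = fderiv (fun p => fderiv g p (1,0)) (θ,t) (0,1)
  have h1 : pt (pθ f) θ t =
      fderiv ℝ (fun p : ℝ × ℝ => fderiv ℝ (uncurry f) p ((1 : ℝ), (0 : ℝ))) (θ, t) (0, 1) := by
    have e1 : uncurry (pθ f) = fun p : ℝ × ℝ => fderiv ℝ (uncurry f) p ((1 : ℝ), (0 : ℝ)) := by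
      funext p; cases p with | mk a b => exact pθ_eq_fderiv hd1 a b
    have := pt_eq_fderiv ((contDiff_uncurry_pθ hf).differentiable one_ne_zero) θ t
    rw [this, e1]
  have h2 : pθ (pt f) θ t =
      fderiv ℝ (fun p : ℝ × ℝ => fderiv ℝ (uncurry f) p ((0 : ℝ), (1 : ℝ))) (θ, t) (1, 0) := by
    have e1 : uncurry (pt f) = fun p : ℝ × ℝ => fderiv ℝ (uncurry f) p ((0 : ℝ), (1 : ℝ)) := by
      funext p; cases p with | mk a b => exact pt_eq_fderiv hd1 a b
    have := pθ_eq_fderiv ((contDiff_uncurry_pt hf).differentiable one_ne_zero) θ t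
    rw [this, e1]
  have key : ∀ v w : ℝ × ℝ,
      fderiv ℝ (fun p : ℝ × ℝ => fderiv ℝ (uncurry f) p v) (θ, t) w =
        fderiv ℝ (fderiv ℝ (uncurry f)) (θ, t) w v := by
    intro v w
    rw [fderiv_clm_apply hdd (differentiableAt_const v)]
    simp
  rw [h1, h2, key, key]
  exact hsym _ _

end aux


section main

variable (U A η α : ℝ → ℝ → ℝ) (Λ K : ℝ)

/-- The energy integrand. -/
noncomputable def EIntg (θ s : ℝ) : ℝ := (pt U θ s) ^ 2 / Real.sqrt (α θ s) + Real.sqrt (α θ s) * (pθ U θ s) ^ 2 + (Real.exp (4 * U θ s) / (4 * s ^ 2)) * ((pt A θ s) ^ 2 / Real.sqrt (α θ s) + Real.sqrt (α θ s) * (pθ A θ s) ^ 2) + Real.sqrt (α θ s) * Real.exp (2 * (η θ s - U θ s)) * Λ + (Real.exp (2 * η θ s) * Real.sqrt (α θ s) / (4 * s ^ 4)) * K ^ 2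

/-- Time derivative of the energy integrand. -/
noncomputable def EIntD (θ s : ℝ) : ℝ := (8 * s^5 * Real.sqrt (α θ s)^2 * pt U θ s * pt (pt U) θ s - 2 * s^5 * pt U θ s^2 * pt α θ s + 2 * s^5 * Real.sqrt (α θ s)^2 * pt α θ s * pθ U θ s^2 + 8 * s^5 * Real.sqrt (α θ s)^4 * pθ U θ s * pt (pθ U) θ s + 4 * Real.exp (4 * U θ s) * s^3 * Real.sqrt (α θ s)^2 * pt U θ s * pt A θ s^2 + 4 * Real.exp (4 * U θ s) * s^3 * Real.sqrt (α θ s)^4 * pt U θ s * pθ A θ s^2 - 2 * Real.exp (4 * U θ s) * s^2 * Real.sqrt (α θ s)^2 * pt A θ s^2 - 2 * Real.exp (4 * U θ s) * s^2 * Real.sqrt (α θ s)^4 * pθ A θ s^2 + 2 * Real.exp (4 * U θ s) * s^3 * Real.sqrt (α θ s)^2 * pt A θ s * pt (pt A) θ s - Real.exp (4 * U θ s) * s^3 * pt A θ s^2 * pt α θ s / 2 + Real.exp (4 * U θ s) * s^3 * Real.sqrt (α θ s)^2 * pt α θ s * pθ A θ s^2 / 2 + 2 * Real.exp (4 * U θ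 s) * s^3 * Real.sqrt (α θ s)^4 * pθ A θ s * pt (pθ A) θ s + Λ * (2 * s^5 * Real.sqrt (α θ s)^2 * pt α θ s * Real.exp (2 * (η θ s - U θ s)) + 8 * s^5 * Real.sqrt (α θ s)^4 * Real.exp (2 * (η θ s - U θ s)) * (pt η θ s - pt U θ s)) + K^2 * (2 * pt η θ s * Real.exp (2 * η θ s) * Real.sqrt (α θ s)^4 * s + Real.exp (2 * η θ s) * Real.sqrt (α θ s)^2 * pt α θ s * s / 2 - 4 * Real.exp (2 * η θ s) * Real.sqrt (α θ s)^4)) / (4 * s^5 * (Real.sqrt (α θ s))^3)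

/-- The divergence-flux function H. -/
noncomputable def HHf (θ s : ℝ) : ℝ :=
  2 * Real.sqrt (α θ s) * pt U θ s * pθ U θ s
    + Real.exp (4 * U θ s) / (2 * s ^ 2) * Real.sqrt (α θ s) * pt A θ s * pθ A θ s

/-- θ-derivative of H. -/
noncomputable def HHD (θ s : ℝ) : ℝ := (4 * s^2 * pθ α θ s * pt U θ s * pθ U θ s + 8 * s^2 * Real.sqrt (α θ s)^2 * pθ (pt U) θ s * pθ U θ s + 8 * s^2 * Real.sqrt (α θ s)^2 * pt U θ s * pθ (pθ U) θ s + 8 * Real.exp (4 * U θ s) * pθ U θ s * Real.sqrt (α θ s)^2 * pt A θ s * pθ A θ s + Real.exp (4 * U θ s) * pθ α θ s * pt A θ s * pθ A θ s + 2 * Real.exp (4 * U θ s) * Real.sqrt (α θ s)^2 * pθ (pt A) θ s * pθ A θ s + 2 * Real.exp (4 * U θ s) * Real.sqrt (α θ s)^2 * pt A θ s * pθ (pθ A) θ s) / (4 * s^2 * Real.sqrt (α θ s))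

variable {U A η α}

lemma hasDerivAt_EInt (hU : ContDiff ℝ 2 (uncurry U)) (hA : ContDiff ℝ 2 (uncurry A))
    (hη : ContDiff ℝ 2 (uncurry η)) (hα : ContDiff ℝ 2 (uncurry α))
    (θ x : ℝ) (hax : 0 < α θ x) (hx : x ≠ 0) :
    HasDerivAt (fun s => EIntg U A η α Λ K θ s) (EIntD U A η α Λ K θ x) x := by
  have hsapos : 0 < Real.sqrt (α θ x) := Real.sqrt_pos.mpr hax
  have hsa : Real.sqrt (α θ x) ≠ 0 := ne_of_gt hsapos
  have hUd := hU.differentiable two_ne_zero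
  have hAd := hA.differentiable two_ne_zero
  have hηd := hη.differentiable two_ne_zero
  have hαd := hα.differentiable two_ne_zero
  have hptU := (contDiff_uncurry_pt hU).differentiable one_ne_zero
  have hpθU := (contDiff_uncurry_pθ hU).differentiable one_ne_zero
  have hptA := (contDiff_uncurry_pt hA).differentiable one_ne_zero
  have hpθA := (contDiff_uncurry_pθ hA).differentiable one_ne_zero
  have dU : HasDerivAt (fun s => U θ s) (pt U θ x) x := hasDerivAt_pt hUd θ x
  have dη : HasDerivAt (fun s => η θ s) (pt η θ x) x := hasDerivAt_pt hηd θ x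
  have dut : HasDerivAt (fun s => pt U θ s) (pt (pt U) θ x) x := hasDerivAt_pt hptU θ x
  have duθ : HasDerivAt (fun s => pθ U θ s) (pt (pθ U) θ x) x := hasDerivAt_pt hpθU θ x
  have dat : HasDerivAt (fun s => pt A θ s) (pt (pt A) θ x) x := hasDerivAt_pt hptA θ x
  have daθ : HasDerivAt (fun s => pθ A θ s) (pt (pθ A) θ x) x := hasDerivAt_pt hpθA θ x
  have dsq : HasDerivAt (fun s => Real.sqrt (α θ s)) (1 / (2 * Real.sqrt (α θ x)) * pt α θ x) x :=
    (Real.hasDerivAt_sqrt (ne_of_gt hax)).comp x (hasDerivAt_pt hαd θ x)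
  have de4 : HasDerivAt (fun s => Real.exp (4 * U θ s))
      (Real.exp (4 * U θ x) * (4 * pt U θ x)) x := (dU.const_mul 4).exp
  have de2 : HasDerivAt (fun s => Real.exp (2 * (η θ s - U θ s)))
      (Real.exp (2 * (η θ x - U θ x)) * (2 * (pt η θ x - pt U θ x))) x :=
    ((dη.sub dU).const_mul 2).exp
  have de3 : HasDerivAt (fun s => Real.exp (2 * η θ s))
      (Real.exp (2 * η θ x) * (2 * pt η θ x)) x := (dη.const_mul 2).exp
  have dden2 : HasDerivAt (fun s : ℝ => 4 * s ^ 2) (4 * (↑2 * x ^ 1)) x :=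
    (hasDerivAt_pow 2 x).const_mul 4
  have dden4 : HasDerivAt (fun s : ℝ => 4 * s ^ 4) (4 * (↑4 * x ^ 3)) x :=
    (hasDerivAt_pow 4 x).const_mul 4
  have hden2 : (4 : ℝ) * x ^ 2 ≠ 0 := by positivity
  have hden4 : (4 : ℝ) * x ^ 4 ≠ 0 := by positivity
  have dU2 := dut.pow 2
  have dUθ2 := duθ.pow 2
  have dA2 := dat.pow 2
  have dAθ2 := daθ.pow 2
  have big := ((((dU2.div dsq hsa).add (dsq.mul dUθ2)).add
      ((de4.div dden2 hden2).mul ((dA2.div dsq hsa).add (dsq.mul dAθ2)))).add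
      ((dsq.mul de2).mul_const Λ)).add (((de3.mul dsq).div dden4 hden4).mul_const (K ^ 2))
  refine big.congr_deriv ?_
  simp only [Pi.mul_apply, Pi.add_apply, Pi.div_apply, Pi.pow_apply]
  obtain ⟨sa, hsa0, hsaeq⟩ : ∃ sa : ℝ, 0 < sa ∧ Real.sqrt (α θ x) = sa := ⟨_, hsapos, rfl⟩
  have hαeq : α θ x = sa ^ 2 := by rw [← hsaeq, Real.sq_sqrt hax.le]
  unfold EIntD
  rw [hsaeq] at *
  have hsane : sa ≠ 0 := ne_of_gt hsa0
  push_cast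
  field_simp
  ring

lemma hasDerivAt_HH (hU : ContDiff ℝ 2 (uncurry U)) (hA : ContDiff ℝ 2 (uncurry A))
    (hα : ContDiff ℝ 2 (uncurry α))
    (θ s : ℝ) (hax : 0 < α θ s) (hs : s ≠ 0) :
    HasDerivAt (fun θ' => HHf U A α θ' s) (HHD U A α θ s) θ := by
  have hsapos : 0 < Real.sqrt (α θ s) := Real.sqrt_pos.mpr hax
  have hsa : Real.sqrt (α θ s) ≠ 0 := ne_of_gt hsapos
  have hUd := hU.differentiable two_ne_zero
  have hAd := hA.differentiable two_ne_zero
  have hαd := hα.differentiable two_ne_zero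
  have hptU := (contDiff_uncurry_pt hU).differentiable one_ne_zero
  have hpθU := (contDiff_uncurry_pθ hU).differentiable one_ne_zero
  have hptA := (contDiff_uncurry_pt hA).differentiable one_ne_zero
  have hpθA := (contDiff_uncurry_pθ hA).differentiable one_ne_zero
  have dU : HasDerivAt (fun θ' => U θ' s) (pθ U θ s) θ := hasDerivAt_pθ hUd θ s
  have dut : HasDerivAt (fun θ' => pt U θ' s) (pθ (pt U) θ s) θ := hasDerivAt_pθ hptU θ s
  have duθ : HasDerivAt (fun θ' => pθ U θ' s) (pθ (pθ U) θ s) θ := hasDerivAt_pθ hpθU θ s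
  have dat : HasDerivAt (fun θ' => pt A θ' s) (pθ (pt A) θ s) θ := hasDerivAt_pθ hptA θ s
  have daθ : HasDerivAt (fun θ' => pθ A θ' s) (pθ (pθ A) θ s) θ := hasDerivAt_pθ hpθA θ s
  have dsq : HasDerivAt (fun θ' => Real.sqrt (α θ' s)) (1 / (2 * Real.sqrt (α θ s)) * pθ α θ s) θ :=
    (Real.hasDerivAt_sqrt (ne_of_gt hax)).comp θ (hasDerivAt_pθ hαd θ s)
  have de4 : HasDerivAt (fun θ' => Real.exp (4 * U θ' s))
      (Real.exp (4 * U θ s) * (4 * pθ U θ s)) θ := (dU.const_mul 4).exp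
  have big := ((((dsq.const_mul 2).mul dut).mul duθ).add
      ((((de4.div_const (2 * s ^ 2)).mul dsq).mul dat).mul daθ))
  refine big.congr_deriv ?_
  simp only [Pi.mul_apply, Pi.add_apply, Pi.div_apply, Pi.pow_apply]
  obtain ⟨sa, hsa0, hsaeq⟩ : ∃ sa : ℝ, 0 < sa ∧ Real.sqrt (α θ s) = sa := ⟨_, hsapos, rfl⟩
  have hαeq : α θ s = sa ^ 2 := by rw [← hsaeq, Real.sq_sqrt hax.le]
  unfold HHD
  rw [hsaeq] at *
  have hsane : sa ≠ 0 := ne_of_gt hsa0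
  field_simp
  ring

end main


section keyid

variable {U A η α : ℝ → ℝ → ℝ} {Λ K : ℝ}

set_option maxHeartbeats 4000000 in
lemma key_identity (hU : ContDiff ℝ 2 (Function.uncurry U)) (hA : ContDiff ℝ 2 (Function.uncurry A))
    (hη : ContDiff ℝ 2 (Function.uncurry η)) (hα : ContDiff ℝ 2 (Function.uncurry α))
    (θ t : ℝ) (hap : 0 < α θ t) (ht0 : 0 < t)
    (e1 : pt η θ t / t =
      (pt U θ t) ^ 2 + α θ t * (pθ U θ t) ^ 2
        + (Real.exp (4 * U θ t) / (4 * t ^ 2)) * ((pt A θ t) ^ 2 + α θ t * (pθ A θ t) ^ 2)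
        + α θ t * Real.exp (2 * (η θ t - U θ t)) * Λ
        + (Real.exp (2 * η θ t) / (4 * t ^ 4)) * α θ t * K ^ 2)
    (e3 : pt α θ t =
      -4 * t * (α θ t) ^ 2 * Real.exp (2 * (η θ t - U θ t)) * Λ
        - (Real.exp (2 * η θ t) / t ^ 3) * (α θ t) ^ 2 * K ^ 2)
    (e4 : pt (pt U) θ t - α θ t * pθ (pθ U) θ t =
      -(pt U θ t) / t + pθ α θ t * pθ U θ t / 2 + pt α θ t * pt U θ t / (2 * α θ t)
        + (Real.exp (4 * U θ t) / (2 * t ^ 2)) * ((pt A θ t) ^ 2 - α θ t * (pθ A θ t) ^ 2)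
        + α θ t * Λ * Real.exp (2 * (η θ t - U θ t)))
    (e5 : pt (pt A) θ t - α θ t * pθ (pθ A) θ t =
      pt A θ t / t + pθ α θ t * pθ A θ t / 2 + pt α θ t * pt A θ t / (2 * α θ t)
        - 4 * pt A θ t * pt U θ t + 4 * α θ t * pθ A θ t * pθ U θ t) :
    EIntD U A η α Λ K θ t =
      -(2 / t) * ((pt U θ t) ^ 2 / Real.sqrt (α θ t)
          + (Real.exp (4 * U θ t) / (4 * t ^ 2)) * Real.sqrt (α θ t) * (pθ A θ t) ^ 2
          + Real.exp (2 * η θ t) * Real.sqrt (α θ t) * K ^ 2 / (2 * t ^ 4))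
        + HHD U A α θ t := by
  have hcl1 : pt (pθ U) θ t = pθ (pt U) θ t := clairaut hU θ t
  have hcl2 : pt (pθ A) θ t = pθ (pt A) θ t := clairaut hA θ t
  have hα0 : α θ t ≠ 0 := ne_of_gt hap
  have h4 : pt (pt U) θ t =
      α θ t * pθ (pθ U) θ t
        + (-(pt U θ t) / t + pθ α θ t * pθ U θ t / 2 + pt α θ t * pt U θ t / (2 * α θ t)
          + (Real.exp (4 * U θ t) / (2 * t ^ 2)) * ((pt A θ t) ^ 2 - α θ t * (pθ A θ t) ^ 2)
          + α θ t * Λ * Real.exp (2 * (η θ t - U θ t))) := by linarith [e4]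
  have h5 : pt (pt A) θ t =
      α θ t * pθ (pθ A) θ t
        + (pt A θ t / t + pθ α θ t * pθ A θ t / 2 + pt α θ t * pt A θ t / (2 * α θ t)
          - 4 * pt A θ t * pt U θ t + 4 * α θ t * pθ A θ t * pθ U θ t) := by linarith [e5]
  have h1 : pt η θ t =
      ((pt U θ t) ^ 2 + α θ t * (pθ U θ t) ^ 2
        + (Real.exp (4 * U θ t) / (4 * t ^ 2)) * ((pt A θ t) ^ 2 + α θ t * (pθ A θ t) ^ 2)
        + α θ t * Real.exp (2 * (η θ t - U θ t)) * Λ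
        + (Real.exp (2 * η θ t) / (4 * t ^ 4)) * α θ t * K ^ 2) * t :=
    (div_eq_iff (ne_of_gt ht0)).mp e1
  unfold EIntD HHD
  rw [hcl1, hcl2, h4, h5, e3, h1]
  have hsapos : 0 < Real.sqrt (α θ t) := Real.sqrt_pos.mpr hap
  obtain ⟨sa, hsa0, hsaeq⟩ : ∃ sa : ℝ, 0 < sa ∧ Real.sqrt (α θ t) = sa := ⟨_, hsapos, rfl⟩
  have hαeq : α θ t = sa ^ 2 := by rw [← hsaeq, Real.sq_sqrt hap.le]
  rw [hsaeq]
  rw [hαeq]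
  have hsane : sa ≠ 0 := ne_of_gt hsa0
  field_simp
  ring
end keyid

section contper

variable {U A η α : ℝ → ℝ → ℝ} {Λ K : ℝ}
variable {f : ℝ → ℝ → ℝ}

lemma cont_pt (hf : ContDiff ℝ 1 (Function.uncurry f)) :
    Continuous fun p : ℝ × ℝ => pt f p.1 p.2 := by
  have h : (fun p : ℝ × ℝ => pt f p.1 p.2)
      = fun p : ℝ × ℝ => fderiv ℝ (Function.uncurry f) p ((0 : ℝ), (1 : ℝ)) := by
    funext p
    cases p with
    | mk a b => exact pt_eq_fderiv (hf.differentiable one_ne_zero) a b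
  rw [h]
  exact ((hf.fderiv_right (m := 0) (by norm_num)).clm_apply contDiff_const).continuous

lemma cont_pθ (hf : ContDiff ℝ 1 (Function.uncurry f)) :
    Continuous fun p : ℝ × ℝ => pθ f p.1 p.2 := by
  have h : (fun p : ℝ × ℝ => pθ f p.1 p.2)
      = fun p : ℝ × ℝ => fderiv ℝ (Function.uncurry f) p ((1 : ℝ), (0 : ℝ)) := by
    funext p
    cases p with
    | mk a b => exact pθ_eq_fderiv (hf.differentiable one_ne_zero) a b
  rw [h]
  exact ((hf.fderiv_right (m := 0) (by norm_num)).clm_apply contDiff_const).continuous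

lemma pt_per (hper : ∀ θ t, f (θ + 1) t = f θ t) (θ t : ℝ) : pt f (θ + 1) t = pt f θ t := by
  have h : f (θ + 1) = f θ := funext fun s => hper θ s
  unfold pt
  rw [h]

lemma pθ_per (hper : ∀ θ t, f (θ + 1) t = f θ t) (θ t : ℝ) : pθ f (θ + 1) t = pθ f θ t := by
  have h : (fun x => f (x + 1) t) = fun x => f x t := funext fun x => hper x t
  have h2 := deriv_comp_add_const (f := fun θ' => f θ' t) (a := 1) (x := θ)
  unfold pθ
  rw [← h2, h]

lemma cont_EInt_on (hU : ContDiff ℝ 2 (Function.uncurry U)) (hA : ContDiff ℝ 2 (Function.uncurry A))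
    (hη : ContDiff ℝ 2 (Function.uncurry η)) (hα : ContDiff ℝ 2 (Function.uncurry α)) :
    ContinuousOn (fun p : ℝ × ℝ => EIntg U A η α Λ K p.1 p.2)
      {p : ℝ × ℝ | 0 < α p.1 p.2 ∧ p.2 ≠ 0} := by
  have cU : Continuous fun p : ℝ × ℝ => U p.1 p.2 := hU.continuous
  have cA : Continuous fun p : ℝ × ℝ => A p.1 p.2 := hA.continuous
  have cη : Continuous fun p : ℝ × ℝ => η p.1 p.2 := hη.continuous
  have cα : Continuous fun p : ℝ × ℝ => α p.1 p.2 := hα.continuous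
  have c1 : Continuous fun p : ℝ × ℝ => pt U p.1 p.2 := cont_pt (hU.of_le one_le_two)
  have c2 : Continuous fun p : ℝ × ℝ => pθ U p.1 p.2 := cont_pθ (hU.of_le one_le_two)
  have c3 : Continuous fun p : ℝ × ℝ => pt A p.1 p.2 := cont_pt (hA.of_le one_le_two)
  have c4 : Continuous fun p : ℝ × ℝ => pθ A p.1 p.2 := cont_pθ (hA.of_le one_le_two)
  have hsq : ∀ p ∈ {p : ℝ × ℝ | 0 < α p.1 p.2 ∧ p.2 ≠ 0}, Real.sqrt (α p.1 p.2) ≠ 0 :=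
    fun p hp => ne_of_gt (Real.sqrt_pos.mpr hp.1)
  have h2 : ∀ p ∈ {p : ℝ × ℝ | 0 < α p.1 p.2 ∧ p.2 ≠ 0}, (4 : ℝ) * p.2 ^ 2 ≠ 0 :=
    fun p hp => by have := hp.2; positivity
  have h4 : ∀ p ∈ {p : ℝ × ℝ | 0 < α p.1 p.2 ∧ p.2 ≠ 0}, (4 : ℝ) * p.2 ^ 4 ≠ 0 :=
    fun p hp => by have := hp.2; positivity
  have csq : Continuous fun p : ℝ × ℝ => Real.sqrt (α p.1 p.2) := by fun_prop
  have ce4 : Continuous fun p : ℝ × ℝ => Real.exp (4 * U p.1 p.2) := by fun_prop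
  have ce3s : Continuous fun p : ℝ × ℝ => Real.exp (2 * η p.1 p.2) * Real.sqrt (α p.1 p.2) := by
    fun_prop
  have cd2 : Continuous fun p : ℝ × ℝ => (4 : ℝ) * p.2 ^ 2 := by fun_prop
  have cd4 : Continuous fun p : ℝ × ℝ => (4 : ℝ) * p.2 ^ 4 := by fun_prop
  unfold EIntg
  apply ContinuousOn.add
  apply ContinuousOn.add
  apply ContinuousOn.add
  apply ContinuousOn.add
  · exact (c1.pow 2).continuousOn.div csq.continuousOn hsq
  · exact (csq.mul (c2.pow 2)).continuousOn
  · apply ContinuousOn.mul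
    · exact ce4.continuousOn.div cd2.continuousOn h2
    · exact ((c3.pow 2).continuousOn.div csq.continuousOn hsq).add
        (csq.mul (c4.pow 2)).continuousOn
  · have : Continuous fun p : ℝ × ℝ =>
        Real.sqrt (α p.1 p.2) * Real.exp (2 * (η p.1 p.2 - U p.1 p.2)) * Λ := by fun_prop
    exact this.continuousOn
  · exact ((ce3s.continuousOn.div cd4.continuousOn h4).mul continuousOn_const)

lemma cont_EIntD_on (hU : ContDiff ℝ 2 (Function.uncurry U)) (hA : ContDiff ℝ 2 (Function.uncurry A))
    (hη : ContDiff ℝ 2 (Function.uncurry η)) (hα : ContDiff ℝ 2 (Function.uncurry α)) :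
    ContinuousOn (fun p : ℝ × ℝ => EIntD U A η α Λ K p.1 p.2)
      {p : ℝ × ℝ | 0 < α p.1 p.2 ∧ p.2 ≠ 0} := by
  have cU : Continuous fun p : ℝ × ℝ => U p.1 p.2 := hU.continuous
  have cA : Continuous fun p : ℝ × ℝ => A p.1 p.2 := hA.continuous
  have cη : Continuous fun p : ℝ × ℝ => η p.1 p.2 := hη.continuous
  have cα : Continuous fun p : ℝ × ℝ => α p.1 p.2 := hα.continuous
  have c1 : Continuous fun p : ℝ × ℝ => pt U p.1 p.2 := cont_pt (hU.of_le one_le_two)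
  have c2 : Continuous fun p : ℝ × ℝ => pθ U p.1 p.2 := cont_pθ (hU.of_le one_le_two)
  have c3 : Continuous fun p : ℝ × ℝ => pt A p.1 p.2 := cont_pt (hA.of_le one_le_two)
  have c4 : Continuous fun p : ℝ × ℝ => pθ A p.1 p.2 := cont_pθ (hA.of_le one_le_two)
  have c5 : Continuous fun p : ℝ × ℝ => pt α p.1 p.2 := cont_pt (hα.of_le one_le_two)
  have c6 : Continuous fun p : ℝ × ℝ => pt η p.1 p.2 := cont_pt (hη.of_le one_le_two)
  have c7 : Continuous fun p : ℝ × ℝ => pt (pt U) p.1 p.2 := cont_pt (contDiff_uncurry_pt hU)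
  have c8 : Continuous fun p : ℝ × ℝ => pt (pθ U) p.1 p.2 := cont_pt (contDiff_uncurry_pθ hU)
  have c9 : Continuous fun p : ℝ × ℝ => pt (pt A) p.1 p.2 := cont_pt (contDiff_uncurry_pt hA)
  have c10 : Continuous fun p : ℝ × ℝ => pt (pθ A) p.1 p.2 := cont_pt (contDiff_uncurry_pθ hA)
  have hden : ∀ p ∈ {p : ℝ × ℝ | 0 < α p.1 p.2 ∧ p.2 ≠ 0},
      (4 : ℝ) * p.2 ^ 5 * (Real.sqrt (α p.1 p.2)) ^ 3 ≠ 0 := by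
    intro p hp
    have h1 : Real.sqrt (α p.1 p.2) ≠ 0 := ne_of_gt (Real.sqrt_pos.mpr hp.1)
    have h2 : p.2 ≠ 0 := hp.2
    positivity
  unfold EIntD
  exact (by fun_prop : Continuous fun p : ℝ × ℝ => (8 * p.2^5 * (Real.sqrt (α p.1 p.2))^2 * pt U p.1 p.2 * pt (pt U) p.1 p.2 - 2 * p.2^5 * (pt U p.1 p.2)^2 * pt α p.1 p.2 + 2 * p.2^5 * (Real.sqrt (α p.1 p.2))^2 * pt α p.1 p.2 * (pθ U p.1 p.2)^2 + 8 * p.2^5 * (Real.sqrt (α p.1 p.2))^4 * pθ U p.1 p.2 * pt (pθ U) p.1 p.2 + 4 * Real.exp (4 * U p.1 p.2) * p.2^3 * (Real.sqrt (α p.1 p.2))^2 * pt U p.1 p.2 * (pt A p.1 p.2)^2 + 4 * Real.exp (4 * U p.1 p.2) * p.2^3 * (Real.sqrt (α p.1 p.2))^4 * pt U p.1 p.2 * (pθ A p.1 p.2)^2 - 2 * Real.exp (4 * U p.1 p.2) * p.2^2 * (Real.sqrt (α p.1 p.2))^2 * (pt A p.1 p.2)^2 - 2 * Real.exp (4 *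 U p.1 p.2) * p.2^2 * (Real.sqrt (α p.1 p.2))^4 * (pθ A p.1 p.2)^2 + 2 * Real.exp (4 * U p.1 p.2) * p.2^3 * (Real.sqrt (α p.1 p.2))^2 * pt A p.1 p.2 * pt (pt A) p.1 p.2 - Real.exp (4 * U p.1 p.2) * p.2^3 * (pt A p.1 p.2)^2 * pt α p.1 p.2 / 2 + Real.exp (4 * U p.1 p.2) * p.2^3 * (Real.sqrt (α p.1 p.2))^2 * pt α p.1 p.2 * (pθ A p.1 p.2)^2 / 2 + 2 * Real.exp (4 * U p.1 p.2) * p.2^3 * (Real.sqrt (α p.1 p.2))^4 * pθ A p.1 p.2 * pt (pθ A) p.1 p.2 + Λ * (2 * p.2^5 * (Real.sqrt (α p.1 p.2))^2 * pt α p.1 p.2 * Real.exp (2 * (η p.1 p.2 - U p.1 p.2)) + 8 * p.2^5 * (Real.sqrt (α p.1 p.2))^4 * Real.exp (2 * (η p.1 p.2 - U p.1 p.2)) * (pt η p.1 p.2 - pt U p.1 p.2)) + K^2 * (2 * pt η p.1 p.2 * Real.exp (2 * η p.1 p.2) * (Real.sqrt (α p.1 p.2))^4 * p.2 + Real.exp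 (2 * η p.1 p.2) * (Real.sqrt (α p.1 p.2))^2 * pt α p.1 p.2 * p.2 / 2 - 4 * Real.exp (2 * η p.1 p.2) * (Real.sqrt (α p.1 p.2))^4))).continuousOn.div
    (by fun_prop : Continuous fun p : ℝ × ℝ =>
      (4 : ℝ) * p.2 ^ 5 * (Real.sqrt (α p.1 p.2)) ^ 3).continuousOn hden

lemma slice_cont {g : ℝ × ℝ → ℝ} {s : Set (ℝ × ℝ)} (hg : ContinuousOn g s) (x : ℝ)
    (hm : Set.MapsTo (fun θ : ℝ => (θ, x)) (Set.Icc (0:ℝ) 1) s) :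
    ContinuousOn (fun θ => g (θ, x)) (Set.Icc (0:ℝ) 1) :=
  hg.comp ((continuous_id.prodMk continuous_const).continuousOn) hm

end contper


set_option maxHeartbeats 4000000 in
/-- Monotonicity of the energy E(t) for solutions of the areal-coordinate
Einstein equations with positive cosmological constant Λ and twist K:
dE/dt = -(2/t)∫ [U_t²/√α + (e^{4U}/(4t²))√α A_θ² + e^{2η}√α K²/(2t⁴)] dθ ≤ 0. -/
theorem energy_monotone (t₂ t₃ Λ K : ℝ) (ht₂ : 0 < t₂) (ht : t₂ < t₃) (hΛ : 0 < Λ)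
    (U A η α : ℝ → ℝ → ℝ)
    (hU : ContDiff ℝ 2 (Function.uncurry U)) (hA : ContDiff ℝ 2 (Function.uncurry A))
    (hη : ContDiff ℝ 2 (Function.uncurry η)) (hα : ContDiff ℝ 2 (Function.uncurry α))
    (hUper : ∀ θ t, U (θ + 1) t = U θ t) (hAper : ∀ θ t, A (θ + 1) t = A θ t)
    (hηper : ∀ θ t, η (θ + 1) t = η θ t) (hαper : ∀ θ t, α (θ + 1) t = α θ t)
    (hαpos : ∀ θ, ∀ t ∈ Set.Ico t₂ t₃, 0 < α θ t)
    -- Hamiltonian constraint (2.4):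
    (heq1 : ∀ θ, ∀ t ∈ Set.Ico t₂ t₃,
      pt η θ t / t =
        (pt U θ t) ^ 2 + α θ t * (pθ U θ t) ^ 2
          + (Real.exp (4 * U θ t) / (4 * t ^ 2)) * ((pt A θ t) ^ 2 + α θ t * (pθ A θ t) ^ 2)
          + α θ t * Real.exp (2 * (η θ t - U θ t)) * Λ
          + (Real.exp (2 * η θ t) / (4 * t ^ 4)) * α θ t * K ^ 2)
    -- momentum constraint (2.5):
    (heq2 : ∀ θ, ∀ t ∈ Set.Ico t₂ t₃,
      pθ η θ t / t =
        2 * pt U θ t * pθ U θ t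
          + (Real.exp (4 * U θ t) / (2 * t ^ 2)) * pt A θ t * pθ A θ t
          - pθ α θ t / (2 * t * α θ t))
    -- α equation (2.6):
    (heq3 : ∀ θ, ∀ t ∈ Set.Ico t₂ t₃,
      pt α θ t =
        -4 * t * (α θ t) ^ 2 * Real.exp (2 * (η θ t - U θ t)) * Λ
          - (Real.exp (2 * η θ t) / t ^ 3) * (α θ t) ^ 2 * K ^ 2)
    -- U evolution equation (2.8):
    (heq4 : ∀ θ, ∀ t ∈ Set.Ico t₂ t₃,
      pt (pt U) θ t - α θ t * pθ (pθ U) θ t =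
        -(pt U θ t) / t + pθ α θ t * pθ U θ t / 2 + pt α θ t * pt U θ t / (2 * α θ t)
          + (Real.exp (4 * U θ t) / (2 * t ^ 2)) * ((pt A θ t) ^ 2 - α θ t * (pθ A θ t) ^ 2)
          + α θ t * Λ * Real.exp (2 * (η θ t - U θ t)))
    -- A evolution equation (2.9):
    (heq5 : ∀ θ, ∀ t ∈ Set.Ico t₂ t₃,
      pt (pt A) θ t - α θ t * pθ (pθ A) θ t =
        pt A θ t / t + pθ α θ t * pθ A θ t / 2 + pt α θ t * pt A θ t / (2 * α θ t)
          - 4 * pt A θ t * pt U θ t + 4 * α θ t * pθ A θ t * pθ U θ t) :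
    -- conclusion: E is differentiable with the stated nonpositive derivative
    ∀ t ∈ Set.Ico t₂ t₃,
      HasDerivAt
        (fun s => ∫ θ in (0:ℝ)..1,
          ((pt U θ s) ^ 2 / Real.sqrt (α θ s) + Real.sqrt (α θ s) * (pθ U θ s) ^ 2
            + (Real.exp (4 * U θ s) / (4 * s ^ 2))
                * ((pt A θ s) ^ 2 / Real.sqrt (α θ s) + Real.sqrt (α θ s) * (pθ A θ s) ^ 2)
            + Real.sqrt (α θ s) * Real.exp (2 * (η θ s - U θ s)) * Λ
            + (Real.exp (2 * η θ s) * Real.sqrt (α θ s) / (4 * s ^ 4)) * K ^ 2))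
        (-(2 / t) * ∫ θ in (0:ℝ)..1,
          ((pt U θ t) ^ 2 / Real.sqrt (α θ t)
            + (Real.exp (4 * U θ t) / (4 * t ^ 2)) * Real.sqrt (α θ t) * (pθ A θ t) ^ 2
            + Real.exp (2 * η θ t) * Real.sqrt (α θ t) * K ^ 2 / (2 * t ^ 4))) t
      ∧ (-(2 / t) * ∫ θ in (0:ℝ)..1,
          ((pt U θ t) ^ 2 / Real.sqrt (α θ t)
            + (Real.exp (4 * U θ t) / (4 * t ^ 2)) * Real.sqrt (α θ t) * (pθ A θ t) ^ 2
            + Real.exp (2 * η θ t) * Real.sqrt (α θ t) * K ^ 2 / (2 * t ^ 4))) ≤ 0 := by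
  intro t htmem
  obtain ⟨ht2le, ht3gt⟩ := htmem
  have htmem' : t ∈ Set.Ico t₂ t₃ := ⟨ht2le, ht3gt⟩
  have ht0 : 0 < t := lt_of_lt_of_le ht₂ ht2le
  have hαc : Continuous fun p : ℝ × ℝ => α p.1 p.2 := hα.continuous
  have hopen : IsOpen {p : ℝ × ℝ | 0 < α p.1 p.2} := isOpen_lt continuous_const hαc
  have hsub : (Set.Icc (0:ℝ) 1 ×ˢ ({t} : Set ℝ)) ⊆ {p : ℝ × ℝ | 0 < α p.1 p.2} := by
    rintro ⟨a, b⟩ ⟨-, hb⟩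
    simp only [Set.mem_singleton_iff] at hb
    simp only [Set.mem_setOf_eq, hb]
    exact hαpos a t htmem'
  obtain ⟨V, W, hVo, hWo, hVsub, hWsub, hVW⟩ :=
    generalized_tube_lemma isCompact_Icc isCompact_singleton hopen hsub
  have htW : t ∈ W := hWsub rfl
  obtain ⟨ε1, hε1, hball⟩ := Metric.isOpen_iff.mp hWo t htW
  set δ := min (ε1 / 2) (t / 2) with hδdef
  have hδ0 : 0 < δ := by positivity
  have hkey : ∀ p : ℝ × ℝ, p.1 ∈ Set.Icc (0:ℝ) 1 → p.2 ∈ Set.Icc (t - δ) (t + δ) →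
      0 < α p.1 p.2 ∧ p.2 ≠ 0 := by
    rintro ⟨a, b⟩ ha hb
    have hb1 : |b - t| ≤ δ := abs_sub_le_iff.mpr ⟨by linarith [hb.2], by linarith [hb.1]⟩
    have hbW : b ∈ W := hball (by
      simp only [Metric.mem_ball, Real.dist_eq]
      have : δ < ε1 := lt_of_le_of_lt (min_le_left _ _) (by linarith)
      linarith)
    have hbpos : 0 < b := by
      have : δ ≤ t / 2 := min_le_right _ _
      have := hb.1
      linarith
    refine ⟨hVW ⟨hVsub ha, hbW⟩, ne_of_gt hbpos⟩
  have hballIcc : Metric.ball t δ ⊆ Set.Icc (t - δ) (t + δ) := by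
    intro x hx
    simp only [Metric.mem_ball, Real.dist_eq] at hx
    have := abs_sub_lt_iff.mp hx
    exact ⟨by linarith [this.2], by linarith [this.1]⟩
  have htIcc : t ∈ Set.Icc (t - δ) (t + δ) := ⟨by linarith, by linarith⟩
  -- compact set and bound for the derivative
  have hS : IsCompact (Set.Icc (0:ℝ) 1 ×ˢ Set.Icc (t - δ) (t + δ)) :=
    isCompact_Icc.prod isCompact_Icc
  have hSsub : (Set.Icc (0:ℝ) 1 ×ˢ Set.Icc (t - δ) (t + δ)) ⊆
      {p : ℝ × ℝ | 0 < α p.1 p.2 ∧ p.2 ≠ 0} := fun p hp => hkey p hp.1 hp.2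
  obtain ⟨C, hC⟩ := hS.exists_bound_of_continuousOn
    ((cont_EIntD_on (Λ := Λ) (K := K) hU hA hη hα).mono hSsub)
  have hIoc : Set.uIoc (0:ℝ) 1 = Set.Ioc 0 1 := Set.uIoc_of_le zero_le_one
  have hIcc : Set.uIcc (0:ℝ) 1 = Set.Icc 0 1 := Set.uIcc_of_le zero_le_one
  -- measurability of slices
  have hsliceE : ∀ x ∈ Metric.ball t δ,
      ContinuousOn (fun θ => EIntg U A η α Λ K θ x) (Set.Icc (0:ℝ) 1) := by
    intro x hx
    have hmaps : Set.MapsTo (fun θ : ℝ => (θ, x)) (Set.Icc (0:ℝ) 1)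
        {p : ℝ × ℝ | 0 < α p.1 p.2 ∧ p.2 ≠ 0} :=
      fun θ hθ => hkey (θ, x) hθ (hballIcc hx)
    exact slice_cont (cont_EInt_on (Λ := Λ) (K := K) hU hA hη hα) x hmaps
  have hsliceD : ContinuousOn (fun θ => EIntD U A η α Λ K θ t) (Set.Icc (0:ℝ) 1) := by
    have hmaps : Set.MapsTo (fun θ : ℝ => (θ, t)) (Set.Icc (0:ℝ) 1)
        {p : ℝ × ℝ | 0 < α p.1 p.2 ∧ p.2 ≠ 0} :=
      fun θ hθ => hkey (θ, t) hθ htIcc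
    exact slice_cont (cont_EIntD_on (Λ := Λ) (K := K) hU hA hη hα) t hmaps
  have hmeasE : ∀ᶠ x in nhds t, MeasureTheory.AEStronglyMeasurable
      (fun θ => EIntg U A η α Λ K θ x) (MeasureTheory.volume.restrict (Set.uIoc (0:ℝ) 1)) := by
    filter_upwards [Metric.ball_mem_nhds t hδ0] with x hx
    rw [hIoc]
    exact ((hsliceE x hx).aestronglyMeasurable measurableSet_Icc).mono_measure
      (MeasureTheory.Measure.restrict_mono Set.Ioc_subset_Icc_self le_rfl)
  have htball : t ∈ Metric.ball t δ := Metric.mem_ball_self hδ0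
  have hFint : IntervalIntegrable (fun θ => EIntg U A η α Λ K θ t)
      MeasureTheory.volume 0 1 := by
    apply ContinuousOn.intervalIntegrable
    rw [hIcc]
    exact hsliceE t htball
  have hF'meas : MeasureTheory.AEStronglyMeasurable (fun θ => EIntD U A η α Λ K θ t)
      (MeasureTheory.volume.restrict (Set.uIoc (0:ℝ) 1)) := by
    rw [hIoc]
    exact (hsliceD.aestronglyMeasurable measurableSet_Icc).mono_measure
      (MeasureTheory.Measure.restrict_mono Set.Ioc_subset_Icc_self le_rfl)
  have hbound : ∀ᵐ θ ∂MeasureTheory.volume, θ ∈ Set.uIoc (0:ℝ) 1 →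
      ∀ x ∈ Metric.ball t δ, ‖EIntD U A η α Λ K θ x‖ ≤ C := by
    refine Filter.Eventually.of_forall fun θ hθ x hx => ?_
    have hθ' : θ ∈ Set.Icc (0:ℝ) 1 := by
      rw [hIoc] at hθ
      exact Set.Ioc_subset_Icc_self hθ
    exact hC (θ, x) ⟨hθ', hballIcc hx⟩
  have hdiff : ∀ᵐ θ ∂MeasureTheory.volume, θ ∈ Set.uIoc (0:ℝ) 1 →
      ∀ x ∈ Metric.ball t δ, HasDerivAt (fun x => EIntg U A η α Λ K θ x)
        (EIntD U A η α Λ K θ x) x := by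
    refine Filter.Eventually.of_forall fun θ hθ x hx => ?_
    have hθ' : θ ∈ Set.Icc (0:ℝ) 1 := by
      rw [hIoc] at hθ
      exact Set.Ioc_subset_Icc_self hθ
    have hm := hkey (θ, x) hθ' (hballIcc hx)
    exact hasDerivAt_EInt (Λ := Λ) (K := K) hU hA hη hα θ x hm.1 hm.2
  have key := intervalIntegral.hasDerivAt_integral_of_dominated_loc_of_deriv_le
    (F := fun x θ => EIntg U A η α Λ K θ x) (F' := fun x θ => EIntD U A η α Λ K θ x)
    (bound := fun _ => C) (Metric.ball_mem_nhds t hδ0) hmeasE hFint hF'meas hbound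
    intervalIntegrable_const hdiff
  have hDer := key.2
  -- rewrite the derivative value
  have hpt : ∀ θ, EIntD U A η α Λ K θ t =
      -(2 / t) * ((pt U θ t) ^ 2 / Real.sqrt (α θ t)
        + (Real.exp (4 * U θ t) / (4 * t ^ 2)) * Real.sqrt (α θ t) * (pθ A θ t) ^ 2
        + Real.exp (2 * η θ t) * Real.sqrt (α θ t) * K ^ 2 / (2 * t ^ 4))
      + HHD U A α θ t := fun θ =>
    key_identity hU hA hη hα θ t (hαpos θ t htmem') ht0 (heq1 θ t htmem') (heq3 θ t htmem')
      (heq4 θ t htmem') (heq5 θ t htmem')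
  -- slice continuity in θ at time t (global in θ)
  have d1 : Continuous fun θ' : ℝ => pt U θ' t :=
    (cont_pt (hU.of_le one_le_two)).comp (continuous_id.prodMk continuous_const)
  have d2 : Continuous fun θ' : ℝ => pθ U θ' t :=
    (cont_pθ (hU.of_le one_le_two)).comp (continuous_id.prodMk continuous_const)
  have d3 : Continuous fun θ' : ℝ => pt A θ' t :=
    (cont_pt (hA.of_le one_le_two)).comp (continuous_id.prodMk continuous_const)
  have d4 : Continuous fun θ' : ℝ => pθ A θ' t :=
    (cont_pθ (hA.of_le one_le_two)).comp (continuous_id.prodMk continuous_const)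
  have d5 : Continuous fun θ' : ℝ => pθ α θ' t :=
    (cont_pθ (hα.of_le one_le_two)).comp (continuous_id.prodMk continuous_const)
  have d6 : Continuous fun θ' : ℝ => pθ (pt U) θ' t :=
    (cont_pθ (contDiff_uncurry_pt hU)).comp (continuous_id.prodMk continuous_const)
  have d7 : Continuous fun θ' : ℝ => pθ (pθ U) θ' t :=
    (cont_pθ (contDiff_uncurry_pθ hU)).comp (continuous_id.prodMk continuous_const)
  have d8 : Continuous fun θ' : ℝ => pθ (pt A) θ' t :=
    (cont_pθ (contDiff_uncurry_pt hA)).comp (continuous_id.prodMk continuous_const)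
  have d9 : Continuous fun θ' : ℝ => pθ (pθ A) θ' t :=
    (cont_pθ (contDiff_uncurry_pθ hA)).comp (continuous_id.prodMk continuous_const)
  have d10 : Continuous fun θ' : ℝ => U θ' t :=
    hU.continuous.comp (continuous_id.prodMk continuous_const)
  have d11 : Continuous fun θ' : ℝ => η θ' t :=
    hη.continuous.comp (continuous_id.prodMk continuous_const)
  have d12 : Continuous fun θ' : ℝ => α θ' t :=
    hαc.comp (continuous_id.prodMk continuous_const)
  have hsanz : ∀ θ' : ℝ, Real.sqrt (α θ' t) ≠ 0 :=
    fun θ' => ne_of_gt (Real.sqrt_pos.mpr (hαpos θ' t htmem'))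
  have cdint : Continuous fun θ' : ℝ => (pt U θ' t) ^ 2 / Real.sqrt (α θ' t)
      + (Real.exp (4 * U θ' t) / (4 * t ^ 2)) * Real.sqrt (α θ' t) * (pθ A θ' t) ^ 2
      + Real.exp (2 * η θ' t) * Real.sqrt (α θ' t) * K ^ 2 / (2 * t ^ 4) := by
    have hc1 : Continuous fun θ' : ℝ => (pt U θ' t) ^ 2 / Real.sqrt (α θ' t) :=
      (d1.pow 2).div (by fun_prop) hsanz
    have hc2 : Continuous fun θ' : ℝ =>
        (Real.exp (4 * U θ' t) / (4 * t ^ 2)) * Real.sqrt (α θ' t) * (pθ A θ' t) ^ 2 := by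
      fun_prop (disch := positivity)
    have hc3 : Continuous fun θ' : ℝ =>
        Real.exp (2 * η θ' t) * Real.sqrt (α θ' t) * K ^ 2 / (2 * t ^ 4) := by
      fun_prop (disch := positivity)
    exact (hc1.add hc2).add hc3
  have cHHD : Continuous fun θ' : ℝ => HHD U A α θ' t := by
    unfold HHD
    apply Continuous.div
    · fun_prop
    · fun_prop
    · intro θ'
      have h1 := hsanz θ'
      have h2 := ht0.ne'
      positivity
  have hIntDint : IntervalIntegrable (fun θ' => -(2 / t) * ((pt U θ' t) ^ 2 / Real.sqrt (α θ' t)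
      + (Real.exp (4 * U θ' t) / (4 * t ^ 2)) * Real.sqrt (α θ' t) * (pθ A θ' t) ^ 2
      + Real.exp (2 * η θ' t) * Real.sqrt (α θ' t) * K ^ 2 / (2 * t ^ 4)))
      MeasureTheory.volume 0 1 := (continuous_const.mul cdint).intervalIntegrable 0 1
  have hIntH : IntervalIntegrable (fun θ' => HHD U A α θ' t) MeasureTheory.volume 0 1 :=
    cHHD.intervalIntegrable 0 1
  have hHder : ∀ x ∈ Set.uIcc (0:ℝ) 1, HasDerivAt (fun θ' => HHf U A α θ' t) (HHD U A α x t) x :=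
    fun x _ => hasDerivAt_HH hU hA hα x t (hαpos x t htmem') ht0.ne'
  have hHper : HHf U A α 1 t = HHf U A α 0 t := by
    have h01 : (1:ℝ) = 0 + 1 := by norm_num
    rw [h01]
    unfold HHf
    rw [hαper 0 t, hUper 0 t, pt_per hUper 0 t, pθ_per hUper 0 t, pt_per hAper 0 t,
      pθ_per hAper 0 t]
  have hIntegralH : (∫ θ in (0:ℝ)..1, HHD U A α θ t) = 0 := by
    rw [intervalIntegral.integral_eq_sub_of_hasDerivAt hHder hIntH, hHper, sub_self]
  have hval : (∫ θ in (0:ℝ)..1, EIntD U A η α Λ K θ t) =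
      -(2 / t) * ∫ θ in (0:ℝ)..1,
        ((pt U θ t) ^ 2 / Real.sqrt (α θ t)
          + (Real.exp (4 * U θ t) / (4 * t ^ 2)) * Real.sqrt (α θ t) * (pθ A θ t) ^ 2
          + Real.exp (2 * η θ t) * Real.sqrt (α θ t) * K ^ 2 / (2 * t ^ 4)) := by
    rw [intervalIntegral.integral_congr (g := fun θ =>
      -(2 / t) * ((pt U θ t) ^ 2 / Real.sqrt (α θ t)
        + (Real.exp (4 * U θ t) / (4 * t ^ 2)) * Real.sqrt (α θ t) * (pθ A θ t) ^ 2
        + Real.exp (2 * η θ t) * Real.sqrt (α θ t) * K ^ 2 / (2 * t ^ 4))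
      + HHD U A α θ t) (fun θ _ => hpt θ)]
    rw [intervalIntegral.integral_add hIntDint hIntH, hIntegralH, add_zero,
      intervalIntegral.integral_const_mul]
  rw [hval] at hDer
  constructor
  · exact hDer
  · have hnonneg : 0 ≤ ∫ θ in (0:ℝ)..1,
        ((pt U θ t) ^ 2 / Real.sqrt (α θ t)
          + (Real.exp (4 * U θ t) / (4 * t ^ 2)) * Real.sqrt (α θ t) * (pθ A θ t) ^ 2
          + Real.exp (2 * η θ t) * Real.sqrt (α θ t) * K ^ 2 / (2 * t ^ 4)) := by
      apply intervalIntegral.integral_nonneg zero_le_one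
      intro u hu
      positivity
    have h2t : 0 ≤ (2 / t) * ∫ θ in (0:ℝ)..1,
        ((pt U θ t) ^ 2 / Real.sqrt (α θ t)
          + (Real.exp (4 * U θ t) / (4 * t ^ 2)) * Real.sqrt (α θ t) * (pθ A θ t) ^ 2
          + Real.exp (2 * η θ t) * Real.sqrt (α θ t) * K ^ 2 / (2 * t ^ 4)) :=
      mul_nonneg (by positivity) hnonneg
    linarith
end
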